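/- Suppose ν_t = E[X | 𝓕_t] where X = h(C_T) for a bounded h : 𝒞 → ℝ and T is an a.s. finite 𝓕-stopping time, and assume decoupling: E[X | 𝓕_t ⊔ σ(C_{δ_t})] = E[X | σ(C_{δ_t})] a.s. for a random variable C_{δ_t} with values in finite 𝒞. Then ν_t = Σ_{c ∈ 𝒞} E[X | C_{δ_t} = c] · P(C_{δ_t} = c | 𝓕_t) a.s. -/

import Mathlib

/-!
Taking `E[· | 𝓕_t]` of `E[X | 𝓕_t ⊔ σ(C)]` and using decoupling gives
`E[X | 𝓕_t] = E[E[X | σ(C)] | 𝓕_t]`. Since `C` takes finitely many values, `E[X | σ(C)]` is the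
function `c ↦ E[X | C = c]` evaluated at `C`, a finite linear combination of the indicators of the
fibres `{C = c}`, and linearity of `E[· | 𝓕_t]` turns it into the claimed sum. Null fibres
contribute nothing, since their average has the factor `(0 : ℝ)⁻¹ = 0`.
-/

open MeasureTheory Set

section FiberAverage

variable {Ω α : Type*} {m0 : MeasurableSpace Ω} {μ : Measure Ω} {f : Ω → α}

/-- The elementary conditional expectation `E[X | f = c]`; it is `0` when `{f = c}` is null. -/
noncomputable def fiberAverage (μ : Measure Ω) (f : Ω → α) (X : Ω → ℝ) (c : α) : ℝ :=
  (μ (f ⁻¹' {c})).toReal⁻¹ * ∫ ω in f ⁻¹' {c}, X ω ∂μ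

theorem fiberAverage_of_measure_eq_zero {X : Ω → ℝ} {c : α} (h : μ (f ⁻¹' {c}) = 0) :
    fiberAverage μ f X c = 0 := by
  simp [fiberAverage, h]

variable [MeasurableSpace α]

theorem setIntegral_fiberAverage_comp [IsFiniteMeasure μ] [MeasurableSingletonClass α]
    (hf : Measurable f) (X : Ω → ℝ) (c : α) :
    ∫ ω in f ⁻¹' {c}, fiberAverage μ f X (f ω) ∂μ = ∫ ω in f ⁻¹' {c}, X ω ∂μ := by
  have hconst : EqOn (fun ω => fiberAverage μ f X (f ω)) (fun _ => fiberAverage μ f X c)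
      (f ⁻¹' {c}) := fun ω hω => congrArg (fiberAverage μ f X) hω
  rw [setIntegral_congr_fun (hf (measurableSet_singleton c)) hconst, setIntegral_const,
    smul_eq_mul, fiberAverage, measureReal_def, ← mul_assoc]
  rcases eq_or_ne (μ (f ⁻¹' {c})) 0 with h0 | h0
  · simp [Measure.restrict_eq_zero.mpr h0]
  · rw [mul_inv_cancel₀ (ENNReal.toReal_ne_zero.mpr ⟨h0, measure_ne_top μ _⟩), one_mul]

theorem setIntegral_preimage_eq_sum_fiber (hf : Measurable f) [MeasurableSingletonClass α]
    {X : Ω → ℝ} (hX : Integrable X μ) (s : Finset α) :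
    ∫ ω in f ⁻¹' ↑s, X ω ∂μ = ∑ c ∈ s, ∫ ω in f ⁻¹' {c}, X ω ∂μ := by
  rw [← Finset.set_biUnion_preimage_singleton]
  exact integral_biUnion_finset s (fun c _ => hf (measurableSet_singleton c))
    (pairwiseDisjoint_fiber f _) (fun _ _ => hX.integrableOn)

theorem integrable_comp_of_finite [IsFiniteMeasure μ] [Finite α] [MeasurableSingletonClass α]
    (hf : Measurable f) (g : α → ℝ) : Integrable (fun ω => g (f ω)) μ := by
  obtain ⟨C, hC⟩ := Finite.exists_le fun c => ‖g c‖
  exact .of_bound ((measurable_of_finite g).comp hf).aestronglyMeasurable C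
    (ae_of_all _ fun ω => hC (f ω))

theorem fiberAverage_comp_ae_eq_condExp [IsFiniteMeasure μ] [Finite α]
    [MeasurableSingletonClass α] (hf : Measurable f) {X : Ω → ℝ} (hX : Integrable X μ) :
    (fun ω => fiberAverage μ f X (f ω)) =ᵐ[μ] μ[X | MeasurableSpace.comap f inferInstance] := by
  refine ae_eq_condExp_of_forall_setIntegral_eq hf.comap_le hX
    (fun _ _ _ => (integrable_comp_of_finite hf _).integrableOn) ?_
    ((measurable_of_finite (fiberAverage μ f X)).comp (comap_measurable f)).aestronglyMeasurable
  rintro _ ⟨S, -, rfl⟩ -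
  rw [← S.toFinite.coe_toFinset, setIntegral_preimage_eq_sum_fiber hf hX,
    setIntegral_preimage_eq_sum_fiber hf (integrable_comp_of_finite hf _)]
  exact Finset.sum_congr rfl fun c _ => setIntegral_fiberAverage_comp hf X c

theorem condExp_comp_ae_eq_sum_indicator [IsFiniteMeasure μ] [Fintype α]
    [MeasurableSingletonClass α] (hf : Measurable f) (g : α → ℝ) (m : MeasurableSpace Ω) :
    μ[fun ω => g (f ω) | m] =ᵐ[μ]
      fun ω => ∑ c, g c * μ[(f ⁻¹' {c}).indicator (fun _ => (1 : ℝ)) | m] ω := by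
  classical
  have hsum : (fun ω => g (f ω)) = ∑ c, g c • (f ⁻¹' {c}).indicator (fun _ => (1 : ℝ)) := by
    funext ω
    simp [indicator_apply]
  have hsmul : ∀ᵐ ω ∂μ, ∀ c, μ[g c • (f ⁻¹' {c}).indicator (fun _ => (1 : ℝ)) | m] ω =
      g c * μ[(f ⁻¹' {c}).indicator (fun _ => (1 : ℝ)) | m] ω :=
    ae_all_iff.mpr fun c => condExp_smul (g c) _ m
  rw [hsum]
  filter_upwards [condExp_finsetSum (fun c _ => (integrable_const (1 : ℝ)).indicator
    (hf (measurableSet_singleton c)) |>.smul (g c)) m, hsmul] with ω hω hω'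
  rw [hω, Finset.sum_apply]
  exact Finset.sum_congr rfl fun c _ => hω' c

end FiberAverage

theorem condExp_ae_eq_condExp_condExp_of_condExp_sup_ae_eq {Ω : Type*} {m0 : MeasurableSpace Ω}
    {μ : Measure Ω} [IsFiniteMeasure μ] {m m' : MeasurableSpace Ω} (hm : m ≤ m0) (hm' : m' ≤ m0)
    {X : Ω → ℝ} (hX : μ[X | m ⊔ m'] =ᵐ[μ] μ[X | m']) :
    μ[X | m] =ᵐ[μ] μ[μ[X | m'] | m] :=
  (condExp_condExp_of_le le_sup_left (sup_le hm hm')).symm.trans (condExp_congr_ae hX)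

theorem stmt14_general
    {Ω : Type*} {m0 : MeasurableSpace Ω} (μ : Measure Ω) [IsProbabilityMeasure μ]
    {𝒞 : Type*} [Fintype 𝒞] [MeasurableSpace 𝒞] [MeasurableSingletonClass 𝒞]
    (𝓕 : Filtration NNReal m0)
    (X : Ω → ℝ)
    (hXmeas : Measurable X) (hXbdd : ∃ M, ∀ ω, |X ω| ≤ M)
    (t : NNReal)
    -- the state at the macrotransition exit time `δ_t`
    (Cδ : Ω → 𝒞) (hCδ : Measurable Cδ)
    (hdecouple :
      μ[X | 𝓕 t ⊔ MeasurableSpace.comap Cδ inferInstance]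
        =ᵐ[μ] μ[X | MeasurableSpace.comap Cδ inferInstance]) :
    μ[X | 𝓕 t] =ᵐ[μ]
      fun ω =>
        ∑ c ∈ Finset.univ.filter (fun c : 𝒞 => 0 < μ {ω' | Cδ ω' = c}),
          ((μ {ω' | Cδ ω' = c}).toReal⁻¹ * ∫ ω' in {ω' | Cδ ω' = c}, X ω' ∂μ) *
            (μ[({ω' | Cδ ω' = c}).indicator (fun _ => (1 : ℝ)) | 𝓕 t]) ω := by
  obtain ⟨M, hM⟩ := hXbdd
  have hX : Integrable X μ :=
    .of_bound hXmeas.aestronglyMeasurable M (ae_of_all _ hM)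
  calc μ[X | 𝓕 t]
      =ᵐ[μ] μ[μ[X | MeasurableSpace.comap Cδ inferInstance] | 𝓕 t] :=
        condExp_ae_eq_condExp_condExp_of_condExp_sup_ae_eq (𝓕.le t) hCδ.comap_le hdecouple
    _ =ᵐ[μ] μ[fun ω => fiberAverage μ Cδ X (Cδ ω) | 𝓕 t] :=
        condExp_congr_ae (fiberAverage_comp_ae_eq_condExp hCδ hX).symm
    _ =ᵐ[μ] _ := condExp_comp_ae_eq_sum_indicator hCδ _ _
    _ = _ := by
        funext ω
        refine (Finset.sum_filter_of_ne fun c _ hc => pos_iff_ne_zero.mpr fun h0 => hc ?_).symm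
        rw [fiberAverage_of_measure_eq_zero h0, zero_mul]

/-- Theorem 1 (equation (3)) of the paper: under decoupling,
`ν_t = E[X | 𝓕_t] = Σ_c E[X | C_{δ_t} = c] · P(C_{δ_t} = c | 𝓕_t)` a.s. -/
theorem stmt14
    {Ω : Type*} {m0 : MeasurableSpace Ω} (μ : Measure Ω) [IsProbabilityMeasure μ]
    {𝒞 : Type*} [Fintype 𝒞] [DecidableEq 𝒞] [MeasurableSpace 𝒞] [MeasurableSingletonClass 𝒞]
    (𝓕 : Filtration NNReal m0)
    -- the coarsened process and the a.s. finite stopping time `T`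
    (Cproc : NNReal → Ω → 𝒞) (hCproc : ∀ s, Measurable (Cproc s))
    (T : Ω → NNReal) (hT : IsStoppingTime 𝓕 (fun ω => (T ω : WithTop NNReal)))
    (h : 𝒞 → ℝ)
    (X : Ω → ℝ) (hX : X = fun ω => h (Cproc (T ω) ω))
    (hXmeas : Measurable X) (hXbdd : ∃ M, ∀ ω, |X ω| ≤ M)
    (t : NNReal)
    -- the state at the macrotransition exit time `δ_t`
    (Cδ : Ω → 𝒞) (hCδ : Measurable Cδ)
    (hdecouple :
      μ[X | 𝓕 t ⊔ MeasurableSpace.comap Cδ inferInstance]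
        =ᵐ[μ] μ[X | MeasurableSpace.comap Cδ inferInstance]) :
    μ[X | 𝓕 t] =ᵐ[μ]
      fun ω =>
        ∑ c ∈ Finset.univ.filter (fun c : 𝒞 => 0 < μ {ω' | Cδ ω' = c}),
          ((μ {ω' | Cδ ω' = c}).toReal⁻¹ * ∫ ω' in {ω' | Cδ ω' = c}, X ω' ∂μ) *
            (μ[({ω' | Cδ ω' = c}).indicator (fun _ => (1 : ℝ)) | 𝓕 t]) ω :=
  stmt14_general μ 𝓕 X hXmeas hXbdd t Cδ hCδ hdecouple
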